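/- arXiv:2605.30610 — 2 statements merged into one kernel-verified Lean document; each statement's English description precedes it below -/
import Mathlib

section
/- Let $F : \mathbb{R}^m \to \mathbb{R}$ and $G : \mathbb{R}^m \to \mathbb{R}$ be continuous. Suppose a sequence $\{\theta_k\}$ satisfies the approximate-solver condition $L_{\rho_k}(\theta_k, \lambda_k) \ge L_{\rho_k}(\theta, \lambda_k) - \epsilon_k$ for all $\theta$, where $L_{\rho}(\theta,\lambda) = F(\theta) - \frac{\rho}{2}\max(0, G(\theta) - \lambda/\rho)^2$, the multipliers $\lambda_k \in [\lambda_{\min}, 0]$ are bounded, $\epsilon_k$ is bounded, and $\rho_k \to \infty$. If $\theta_k \to \bar\theta$ along a subsequence, then $\max(0, G(\bar\theta)) \le \max(0, G(\theta))$ for all $\theta \in \mathbb{R}^m$. -/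
open Filter Topology Set

set_option maxHeartbeats 1000000 in
/-- Feasibility of CFO (unbounded-penalty case): limit points of approximate
maximizers of the augmented Lagrangian minimize the infeasibility measure. -/
theorem cfo_feasibility {m : ℕ} (F G : (Fin m → ℝ) → ℝ)
    (hF : Continuous F) (hG : Continuous G)
    (θ : ℕ → (Fin m → ℝ)) (lam ρ ε : ℕ → ℝ) (lamMin : ℝ)
    (hlam : ∀ k, lam k ∈ Set.Icc lamMin 0)
    (hρpos : ∀ k, 0 < ρ k)
    (hεbdd : ∃ Cb : ℝ, ∀ k, ε k ≤ Cb)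
    (hεnonneg : ∀ k, 0 ≤ ε k)
    (hsolver : ∀ k, ∀ θ' : Fin m → ℝ,
      F (θ k) - ρ k / 2 * (max 0 (G (θ k) - lam k / ρ k)) ^ 2 ≥
        F θ' - ρ k / 2 * (max 0 (G θ' - lam k / ρ k)) ^ 2 - ε k)
    (hρ : Tendsto ρ atTop atTop)
    (θbar : Fin m → ℝ) (φ : ℕ → ℕ) (hφ : StrictMono φ)
    (hlim : Tendsto (fun n => θ (φ n)) atTop (𝓝 θbar)) :
    ∀ θ' : Fin m → ℝ, max 0 (G θbar) ≤ max 0 (G θ') := by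
  intro θ'
  by_contra hcon
  push_neg at hcon
  obtain ⟨Cb, hCb⟩ := hεbdd
  set a := max 0 (G θbar) with ha
  set b := max 0 (G θ') with hb
  have hb0 : (0:ℝ) ≤ b := le_max_left _ _
  have ha0 : (0:ℝ) ≤ a := le_max_left _ _
  set δ := (a - b)/3 with hδ
  have hδpos : 0 < δ := by
    have : b < a := hcon
    simp only [hδ]; linarith
  set C := F θbar + 1 - F θ' + Cb with hC
  -- limits along the subsequence
  have hGlim : Tendsto (fun n => max 0 (G (θ (φ n)))) atTop (𝓝 a) := by
    have : Tendsto (fun n => G (θ (φ n))) atTop (𝓝 (G θbar)) :=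
      (hG.continuousAt.tendsto).comp hlim
    exact tendsto_const_nhds.max this
  have hFlim : Tendsto (fun n => F (θ (φ n))) atTop (𝓝 (F θbar)) :=
    (hF.continuousAt.tendsto).comp hlim
  have h1 : ∀ᶠ n in atTop, a - δ ≤ max 0 (G (θ (φ n))) :=
    hGlim.eventually (eventually_ge_nhds (by linarith))
  have h2 : ∀ᶠ n in atTop, F (θ (φ n)) ≤ F θbar + 1 :=
    hFlim.eventually (eventually_le_nhds (by linarith))
  have hρφ : Tendsto (fun n => ρ (φ n)) atTop atTop :=
    hρ.comp hφ.tendsto_atTop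
  have h3 : ∀ᶠ n in atTop,
      max (2 * C / δ ^ 2 + 1) ((-lamMin) / δ) ≤ ρ (φ n) :=
    hρφ.eventually_ge_atTop _
  obtain ⟨n, hn1, hn2, hn3⟩ := (h1.and (h2.and h3)).exists
  set k := φ n with hk
  have hr : 0 < ρ k := hρpos k
  obtain ⟨hl1, hl2⟩ := hlam k
  -- bound on M1 := max 0 (G (θ k) - lam k / ρ k)
  have hM1 : a - δ ≤ max 0 (G (θ k) - lam k / ρ k) := by
    have hq : lam k / ρ k ≤ 0 := div_nonpos_of_nonpos_of_nonneg hl2 hr.le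
    calc a - δ ≤ max 0 (G (θ k)) := hn1
    _ ≤ max 0 (G (θ k) - lam k / ρ k) := by
        apply max_le_max le_rfl; linarith
  have haδ : 0 ≤ a - δ := by
    simp only [hδ]; linarith
  -- bound on M2 := max 0 (G θ' - lam k / ρ k)
  have hM2 : max 0 (G θ' - lam k / ρ k) ≤ b + δ := by
    have hml : -lamMin / δ ≤ ρ k := le_trans (le_max_right _ _) hn3
    have hql : -lam k / ρ k ≤ δ := by
      rw [div_le_iff₀ hr]
      have h1 : -lam k ≤ -lamMin := by linarith
      have h2 : -lamMin ≤ δ * ρ k := by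
        rw [div_le_iff₀ hδpos] at hml
        linarith [hml]
      linarith
    have : G θ' - lam k / ρ k ≤ b + δ := by
      have : G θ' ≤ b := le_max_right _ _
      have hrw : G θ' - lam k / ρ k = G θ' + -lam k / ρ k := by ring
      rw [hrw]; linarith
    have hbd : (0:ℝ) ≤ b + δ := by linarith
    exact max_le hbd this
  -- solver inequality
  have hs := hsolver k θ'
  set M1 := max 0 (G (θ k) - lam k / ρ k) with hM1d
  set M2 := max 0 (G θ' - lam k / ρ k) with hM2d
  have hM20 : 0 ≤ M2 := le_max_left _ _
  have hkey : ρ k / 2 * (M1 ^ 2 - M2 ^ 2) ≤ C := by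
    have hε : ε k ≤ Cb := hCb k
    have expand : ρ k / 2 * (M1 ^ 2 - M2 ^ 2)
        = ρ k / 2 * M1 ^ 2 - ρ k / 2 * M2 ^ 2 := by ring
    rw [expand]
    linarith [hs, hn2]
  -- squares bound
  have hsq : δ ^ 2 ≤ M1 ^ 2 - M2 ^ 2 := by
    have e1 : (a - δ) ^ 2 ≤ M1 ^ 2 := by nlinarith [hM1, haδ]
    have e2 : M2 ^ 2 ≤ (b + δ) ^ 2 := by nlinarith [hM2, hM20]
    have hab : a - δ = b + 2 * δ := by simp only [hδ]; ring
    nlinarith [e1, e2]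
  have hrbig : 2 * C / δ ^ 2 + 1 ≤ ρ k := le_trans (le_max_left _ _) hn3
  have hδ2 : 0 < δ ^ 2 := by positivity
  have hbig : 2 * C + δ ^ 2 ≤ ρ k * δ ^ 2 := by
    have h' : 2 * C / δ ^ 2 ≤ ρ k - 1 := by linarith
    have h'' := (div_le_iff₀ hδ2).1 h'
    nlinarith [h'']
  have hfin : ρ k / 2 * δ ^ 2 ≤ C := by
    refine le_trans ?_ hkey
    exact mul_le_mul_of_nonneg_left hsq (by positivity)
  have h2C : ρ k * δ ^ 2 ≤ 2 * C := by nlinarith [hfin]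
  linarith [hbig, h2C, hδ2]
end

section
/- Let $F, G : \mathbb{R}^m \to \mathbb{R}$ be continuous, and let $L_\rho(\theta,\lambda) = F(\theta) - \frac{\rho}{2}\max(0, G(\theta) - \lambda/\rho)^2$. Suppose $\{\theta_k\}$ satisfies $L_{\rho_k}(\theta_k,\lambda_k) \ge L_{\rho_k}(\theta,\lambda_k) - \epsilon_k$ for all $\theta$, with $\lambda_k \in [\lambda_{\min},0]$, $\epsilon_k \to 0$, and $\rho_k \to \infty$. If $\theta_k \to \bar\theta$ along a subsequence and $G(\bar\theta) \le 0$, then for every $\theta$ with $G(\theta) \le 0$ we have $F(\bar\theta) \ge F(\theta)$; i.e., $\bar\theta$ is a global maximizer of $F$ over the feasible set $\{\theta : G(\theta) \le 0\}$. -/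
open Filter Topology Set

/-- Optimality of CFO (unbounded-penalty case): with vanishing solver error,
a feasible limit point is a global maximizer of `F` over the feasible set. -/
theorem cfo_optimality {m : ℕ} (F G : (Fin m → ℝ) → ℝ)
    (hF : Continuous F) (hG : Continuous G)
    (θ : ℕ → (Fin m → ℝ)) (lam ρ ε : ℕ → ℝ) (lamMin : ℝ)
    (hlam : ∀ k, lam k ∈ Set.Icc lamMin 0)
    (hρpos : ∀ k, 0 < ρ k)
    (hε : Tendsto ε atTop (𝓝 0))
    (hεnonneg : ∀ k, 0 ≤ ε k)
    (hsolver : ∀ k, ∀ θ' : Fin m → ℝ,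
      F (θ k) - ρ k / 2 * (max 0 (G (θ k) - lam k / ρ k)) ^ 2 ≥
        F θ' - ρ k / 2 * (max 0 (G θ' - lam k / ρ k)) ^ 2 - ε k)
    (hρ : Tendsto ρ atTop atTop)
    (θbar : Fin m → ℝ) (φ : ℕ → ℕ) (hφ : StrictMono φ)
    (hlim : Tendsto (fun n => θ (φ n)) atTop (𝓝 θbar))
    (hfeas : G θbar ≤ 0) :
    ∀ θ' : Fin m → ℝ, G θ' ≤ 0 → F θbar ≥ F θ' := by
  intro θ' hθ'
  have key : ∀ k, F (θ k) ≥ F θ' - lam k ^ 2 / (2 * ρ k) - ε k := by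
    intro k
    have hρk := hρpos k
    have hlamk := hlam k
    have ht : max 0 (G θ' - lam k / ρ k) ≤ -(lam k / ρ k) := by
      apply max_le
      · rw [le_neg]
        simpa using div_nonpos_of_nonpos_of_nonneg hlamk.2 hρk.le
      · linarith
    have h3 : (max 0 (G θ' - lam k / ρ k)) ^ 2 ≤ (lam k / ρ k) ^ 2 := by
      have := pow_le_pow_left₀ (le_max_left 0 (G θ' - lam k / ρ k)) ht 2
      simpa [neg_pow] using this
    have h4 : ρ k / 2 * (lam k / ρ k) ^ 2 = lam k ^ 2 / (2 * ρ k) := by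
      field_simp
    have h5 : 0 ≤ ρ k / 2 * (max 0 (G (θ k) - lam k / ρ k)) ^ 2 := by positivity
    have h6 := mul_le_mul_of_nonneg_left h3 (by positivity : (0:ℝ) ≤ ρ k / 2)
    have h := hsolver k θ'
    rw [h4] at h6
    linarith
  have hρφ : Tendsto (fun n => ρ (φ n)) atTop atTop := hρ.comp hφ.tendsto_atTop
  have h2ρφ : Tendsto (fun n => 2 * ρ (φ n)) atTop atTop :=
    hρφ.const_mul_atTop (by norm_num)
  have hgbound : Tendsto (fun n => lamMin ^ 2 / (2 * ρ (φ n))) atTop (𝓝 0) :=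
    Tendsto.div_atTop tendsto_const_nhds h2ρφ
  have hbound : Tendsto (fun n => lam (φ n) ^ 2 / (2 * ρ (φ n))) atTop (𝓝 0) := by
    apply squeeze_zero (g := fun n => lamMin ^ 2 / (2 * ρ (φ n)))
    · intro n
      exact div_nonneg (sq_nonneg _) (by linarith [hρpos (φ n)])
    · intro n
      have hlamk := hlam (φ n)
      have hsq : lam (φ n) ^ 2 ≤ lamMin ^ 2 := by nlinarith [hlamk.1, hlamk.2]
      gcongr <;> linarith [hρpos (φ n)]
    · exact hgbound
  have hεφ : Tendsto (fun n => ε (φ n)) atTop (𝓝 0) := hε.comp hφ.tendsto_atTop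
  have hFlim : Tendsto (fun n => F (θ (φ n))) atTop (𝓝 (F θbar)) :=
    (hF.tendsto θbar).comp hlim
  have hRHS : Tendsto (fun n => F θ' - lam (φ n) ^ 2 / (2 * ρ (φ n)) - ε (φ n))
      atTop (𝓝 (F θ' - 0 - 0)) :=
    (tendsto_const_nhds.sub hbound).sub hεφ
  have := le_of_tendsto_of_tendsto' hRHS hFlim (fun n => key (φ n))
  simpa using this
end
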